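/- Let T ⊆ 2^{<ω} be a Silver tree, let k < ω, let v ∈ ω^{<ω}, and let Z ⊆ [T] × ω^ω be open and dense in the subspace [T] × ω^ω. Then there exist a tuple w ∈ ω^{<ω} with v ⊆ w and a Silver tree S ⊑_{k+1} T, clopen in T, such that [S] × B_w ⊆ Z. -/

import Mathlib

open Set

/-- The word `u₀⌢i₀⌢u₁⌢i₁⌢…⌢u_n⌢i_n` built from the defining tuples `u`
and the choice of bits `i`. -/
def silverWord (u : ℕ → List Bool) (i : ℕ → Bool) : ℕ → List Bool
  | 0 => u 0 ++ [i 0]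
  | n + 1 => silverWord u i n ++ (u (n + 1) ++ [i (n + 1)])

/-- `T ⊆ 2^{<ω}` is the Silver tree with defining tuples `u`: it consists of all
tuples `u₀⌢i₀⌢…⌢u_n⌢i_n` together with all their initial segments. -/
def IsSilver (T : Set (List Bool)) (u : ℕ → List Bool) : Prop :=
  T = { s | ∃ (n : ℕ) (i : ℕ → Bool), s <+: silverWord u i n }

/-- `T` is a Silver tree. -/
def SilverTree (T : Set (List Bool)) : Prop :=
  ∃ u, IsSilver T u

/-- The portion `T↾u = {s ∈ T : u ⊆ s or s ⊆ u}`. -/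
def portion (T : Set (List Bool)) (u : List Bool) : Set (List Bool) :=
  { s ∈ T | u <+: s ∨ s <+: u }

/-- The shift `σ⊕v` of a tuple `v` by a tuple `σ` (coordinatewise mod-2 sum,
with `σ` padded by `0` or truncated to the length of `v`). -/
def shiftT (σ v : List Bool) : List Bool :=
  List.ofFn fun i : Fin v.length => xor (v.get i) (σ.getD i.1 false)

/-- The shift `σ⊕T` of a set of tuples. -/
def shiftTree (σ : List Bool) (T : Set (List Bool)) : Set (List Bool) :=
  shiftT σ '' T

/-- The shift `σ⊕a` of a point of Cantor space. -/
def shiftR (σ : List Bool) (a : ℕ → Bool) : ℕ → Bool :=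
  fun i => xor (a i) (σ.getD i false)

/-- The restriction `a↾n ∈ 2^{<ω}` of `a ∈ 2^ω`. -/
def restrictReal (a : ℕ → Bool) (n : ℕ) : List Bool :=
  List.ofFn fun i : Fin n => a i.1

/-- `[T]`, the set of branches of `T`. -/
def branches (T : Set (List Bool)) : Set (ℕ → Bool) :=
  { a | ∀ n, restrictReal a n ∈ T }

/-- The splitting levels `oi_T(n) = |u₀|+1+…+|u_{n-1}|+1+|u_n|` computed
from the defining tuples `u`. -/
def oi (u : ℕ → List Bool) (n : ℕ) : ℕ :=
  (∑ k ∈ Finset.range (n + 1), (u k).length) + n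

/-- `S ⊑ₙ T` : `S ⊆ T` and the first `n` splitting levels agree. -/
def RefinesN (S T : Set (List Bool)) (n : ℕ) : Prop :=
  S ⊆ T ∧ ∀ uS uT : ℕ → List Bool, IsSilver S uS → IsSilver T uT →
    ∀ k < n, oi uS k = oi uT k

/-- `S` is clopen in `T` : `S` is a finite union of portions of `T`. -/
def ClopenIn (S T : Set (List Bool)) : Prop :=
  ∃ F : Finset (List Bool), ↑F ⊆ T ∧ S = ⋃ u ∈ F, portion T u

/-- The Baire interval `B_v = {x ∈ ω^ω : v ⊂ x}`. -/
def baire (v : List ℕ) : Set (ℕ → ℕ) :=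
  { x | ∀ i : Fin v.length, x i.1 = v.get i }

/-- `s ∈ 2^{<ω}` is an initial segment of `a ∈ 2^ω`. -/
def prefixOfReal (s : List Bool) (a : ℕ → Bool) : Prop :=
  ∀ i : Fin s.length, a i.1 = s.get i

/-! The argument is a finite fusion. Fix the bits `β` of a branch at the first `k + 1` splitting
levels of `T`. Fixing also the bits at the next `r` splitting levels gives a node of `T`, and that
node together with a stem `w` spans a basic box; since `Z` is relatively open and dense, node and
stem can be extended until the box lies inside `Z`. Doing this in turn for each of the `2 ^ (k + 1)`
choices of `β`, always extending the bits fixed so far, gives one choice of bits and one stem that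
work for every `β`. Freezing those splitting levels yields a Silver subtree `S` of `T` that keeps
the first `k + 1` splitting levels of `T` and is the union of the portions of `T` at its nodes
that have passed `k + 2` splittings. -/

section Cylinder

variable {α β : Type*}

def listCylinder (l : List α) : Set (ℕ → α) :=
  { x | ∀ i : Fin l.length, x i = l.get i }

theorem mem_listCylinder_iff {l : List α} {x : ℕ → α} :
    x ∈ listCylinder l ↔ ∀ i (h : i < l.length), x i = l[i] :=
  ⟨fun hx i h => hx ⟨i, h⟩, fun hx i => hx i i.2⟩

theorem listCylinder_anti {l l' : List α} (h : l <+: l') : listCylinder l' ⊆ listCylinder l := by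
  intro x hx
  rw [mem_listCylinder_iff] at hx ⊢
  intro i hi
  rw [hx i (hi.trans_le h.length_le), h.getElem hi]

theorem listCylinder_ofFn (x : ℕ → α) (n : ℕ) :
    listCylinder (List.ofFn fun i : Fin n => x i) = PiNat.cylinder x n := by
  ext y
  simp [mem_listCylinder_iff, PiNat.mem_cylinder_iff]

theorem self_mem_listCylinder_ofFn (x : ℕ → α) (n : ℕ) :
    x ∈ listCylinder (List.ofFn fun i : Fin n => x i) := by
  rw [listCylinder_ofFn]
  exact PiNat.self_mem_cylinder x n

theorem prefix_ofFn_of_mem_listCylinder {l : List α} {x : ℕ → α} (hx : x ∈ listCylinder l)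
    {n : ℕ} (hn : l.length ≤ n) : l <+: List.ofFn fun i : Fin n => x i := by
  rw [List.prefix_iff_getElem]
  exact ⟨by simpa using hn, fun i hi => by simp [mem_listCylinder_iff.mp hx i hi]⟩

theorem prefix_of_mem_listCylinder {l l' : List α} {x : ℕ → α} (hx : x ∈ listCylinder l)
    (hx' : x ∈ listCylinder l') (h : l.length ≤ l'.length) : l <+: l' :=
  List.prefix_of_prefix_length_le (prefix_ofFn_of_mem_listCylinder hx h)
    (prefix_ofFn_of_mem_listCylinder hx' le_rfl) h

theorem getD_eq_getD_of_prefix {l l' : List α} (h : l <+: l') {p : ℕ} (hp : p < l.length)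
    (d : α) : l'.getD p d = l.getD p d := by
  obtain ⟨t, rfl⟩ := h
  exact List.getD_append _ _ _ _ hp

theorem apply_eq_getD_of_mem_listCylinder {l : List α} {x : ℕ → α} (hx : x ∈ listCylinder l)
    {p : ℕ} (hp : p < l.length) (d : α) : x p = l.getD p d := by
  rw [List.getD_eq_getElem _ _ hp, mem_listCylinder_iff.mp hx p hp]

variable [TopologicalSpace α] [DiscreteTopology α] [TopologicalSpace β] [DiscreteTopology β]

theorem isOpen_listCylinder (l : List α) : IsOpen (listCylinder l) := by
  have : listCylinder l = ⋂ i : Fin l.length, (fun x : ℕ → α => x i) ⁻¹' {l.get i} := by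
    ext x
    simp [listCylinder]
  rw [this]
  exact isOpen_iInter_of_finite fun i => (isOpen_discrete _).preimage (continuous_apply _)

theorem exists_cylinder_prod_subset {O : Set ((ℕ → α) × (ℕ → β))} (hO : IsOpen O)
    {x : ℕ → α} {y : ℕ → β} (hxy : (x, y) ∈ O) :
    ∃ n, PiNat.cylinder x n ×ˢ PiNat.cylinder y n ⊆ O := by
  obtain ⟨U, hU, V, hV, hUV⟩ := mem_nhds_prod_iff.mp (hO.mem_nhds hxy)
  obtain ⟨_, ⟨x', m, rfl⟩, hxm, hmU⟩ :=
    (PiNat.isTopologicalBasis_cylinders fun _ => α).mem_nhds_iff.mp hU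
  obtain ⟨_, ⟨y', m', rfl⟩, hym', hm'V⟩ :=
    (PiNat.isTopologicalBasis_cylinders fun _ => β).mem_nhds_iff.mp hV
  refine ⟨max m m', (Set.prod_mono ?_ ?_).trans hUV⟩
  · rw [← PiNat.mem_cylinder_iff_eq.mp hxm] at hmU
    exact (PiNat.cylinder_anti x (le_max_left m m')).trans hmU
  · rw [← PiNat.mem_cylinder_iff_eq.mp hym'] at hm'V
    exact (PiNat.cylinder_anti y (le_max_right m m')).trans hm'V

theorem exists_prefix_listCylinder_prod_subset [Inhabited β] {B : Set (ℕ → α)}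
    {Z : Set ((ℕ → α) × (ℕ → β))}
    (hZopen : ∃ O, IsOpen O ∧ Z = O ∩ B ×ˢ (univ : Set (ℕ → β)))
    (hZdense : B ×ˢ (univ : Set (ℕ → β)) ⊆ closure Z) {t : List α}
    (ht : (listCylinder t ∩ B).Nonempty) (w : List β) :
    ∃ t' w', t <+: t' ∧ w <+: w' ∧ (listCylinder t' ∩ B).Nonempty ∧
      (listCylinder t' ∩ B) ×ˢ listCylinder w' ⊆ Z := by
  obtain ⟨O, hO, rfl⟩ := hZopen
  obtain ⟨x, hxt, hxB⟩ := ht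
  set y : ℕ → β := fun p => w.getD p default
  have hyw : y ∈ listCylinder w :=
    mem_listCylinder_iff.mpr fun i h => List.getD_eq_getElem _ _ h
  obtain ⟨⟨x₁, y₁⟩, ⟨hx₁t, hy₁w⟩, hx₁O, hx₁B, -⟩ :=
    mem_closure_iff.mp (hZdense (show (x, y) ∈ _ from ⟨hxB, trivial⟩)) _
      ((isOpen_listCylinder t).prod (isOpen_listCylinder w)) (show (x, y) ∈ _ from ⟨hxt, hyw⟩)
  obtain ⟨n, hn⟩ := exists_cylinder_prod_subset hO hx₁O
  set N := max n (max t.length w.length)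
  refine ⟨List.ofFn fun i : Fin N => x₁ i, List.ofFn fun i : Fin N => y₁ i,
    prefix_ofFn_of_mem_listCylinder hx₁t (by omega),
    prefix_ofFn_of_mem_listCylinder hy₁w (by omega),
    ⟨x₁, self_mem_listCylinder_ofFn x₁ N, hx₁B⟩, ?_⟩
  rintro ⟨x', y'⟩ ⟨⟨hx', hx'B⟩, hy'⟩
  rw [listCylinder_ofFn] at hx' hy'
  exact ⟨hn ⟨PiNat.cylinder_anti _ (le_max_left _ _) hx',
    PiNat.cylinder_anti _ (le_max_left _ _) hy'⟩, hx'B, trivial⟩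

end Cylinder

section SilverWord

variable (u : ℕ → List Bool) (i : ℕ → Bool)

theorem silverWord_succ (n : ℕ) :
    silverWord u i (n + 1) = silverWord u i n ++ (u (n + 1) ++ [i (n + 1)]) := rfl

theorem oi_zero : oi u 0 = (u 0).length := by simp [oi]

theorem oi_succ (n : ℕ) : oi u (n + 1) = oi u n + (u (n + 1)).length + 1 := by
  simp only [oi, Finset.sum_range_succ]
  ring

theorem oi_strictMono : StrictMono (oi u) :=
  strictMono_nat_of_lt_succ fun n => by rw [oi_succ]; omega

theorem le_oi (n : ℕ) : n ≤ oi u n := (oi_strictMono u).le_apply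

theorem length_silverWord (n : ℕ) : (silverWord u i n).length = oi u n + 1 := by
  induction n with
  | zero => simp [silverWord, oi_zero]
  | succ n ih => simp [silverWord_succ, ih, oi_succ]; ring

variable {u i}

theorem silverWord_congr {u' : ℕ → List Bool} {i' : ℕ → Bool} {n : ℕ}
    (hu : ∀ m ≤ n, u m = u' m) (hi : ∀ m ≤ n, i m = i' m) :
    silverWord u i n = silverWord u' i' n := by
  induction n with
  | zero => simp [silverWord, hu 0 le_rfl, hi 0 le_rfl]
  | succ n ih =>
    rw [silverWord_succ, silverWord_succ, hu (n + 1) le_rfl, hi (n + 1) le_rfl,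
      ih (fun m hm => hu m (by omega)) (fun m hm => hi m (by omega))]

theorem silverWord_prefix_silverWord {m n : ℕ} (h : m ≤ n) :
    silverWord u i m <+: silverWord u i n := by
  induction n, h using Nat.le_induction with
  | base => exact List.prefix_refl _
  | succ n _ ih => exact ih.trans (List.prefix_append _ _)

theorem exists_silverWord_eq_append (n : ℕ) : ∃ s : List Bool, s.length = oi u n ∧
    ∀ i' : ℕ → Bool, (∀ m < n, i' m = i m) → silverWord u i' n = s ++ [i' n] := by
  cases n with
  | zero => exact ⟨u 0, (oi_zero u).symm, fun _ _ => rfl⟩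
  | succ n =>
    refine ⟨silverWord u i n ++ u (n + 1), by simp [length_silverWord, oi_succ]; ring,
      fun i' hi' => ?_⟩
    rw [silverWord_succ, silverWord_congr (fun _ _ => rfl) fun m hm => hi' m (by omega)]
    simp

theorem getD_silverWord_oi {m n : ℕ} (h : m ≤ n) :
    (silverWord u i n).getD (oi u m) false = i m := by
  obtain ⟨s, hs, hword⟩ := exists_silverWord_eq_append (u := u) (i := i) m
  obtain ⟨t, ht⟩ := silverWord_prefix_silverWord (u := u) (i := i) h
  rw [← ht, hword i fun _ _ => rfl, ← hs, List.append_assoc,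
    List.getD_append_right _ _ _ _ le_rfl]
  simp

end SilverWord

section SplittingLevels

variable {u : ℕ → List Bool}

theorem getD_silverWord_of_ne_oi (i i' : ℕ → Bool) {n p : ℕ} (hp : p ≤ oi u n)
    (hne : ∀ m, p ≠ oi u m) :
    (silverWord u i n).getD p false = (silverWord u i' n).getD p false := by
  induction n with
  | zero =>
    have hp0 : p < (u 0).length := by have := hne 0; rw [oi_zero] at hp this; omega
    simp only [silverWord, List.getD_append _ _ _ _ hp0]
  | succ n ih =>
    rcases lt_or_ge p (oi u n + 1) with hpn | hpn
    · rw [silverWord_succ, silverWord_succ,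
        List.getD_append _ _ _ _ (by rwa [length_silverWord]),
        List.getD_append _ _ _ _ (by rwa [length_silverWord]), ih (by omega)]
    · have hlt : p - (oi u n + 1) < (u (n + 1)).length := by
        have := hne (n + 1); rw [oi_succ] at hp this; omega
      rw [silverWord_succ, silverWord_succ,
        List.getD_append_right (silverWord u i n) _ _ _ (by rwa [length_silverWord]),
        List.getD_append_right (silverWord u i' n) _ _ _ (by rwa [length_silverWord]),
        length_silverWord, length_silverWord, List.getD_append _ _ _ _ hlt,
        List.getD_append _ _ _ _ hlt]

def silverTreeOf (u : ℕ → List Bool) : Set (List Bool) :=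
  { s | ∃ (n : ℕ) (i : ℕ → Bool), s <+: silverWord u i n }

theorem isSilver_iff {T : Set (List Bool)} : IsSilver T u ↔ T = silverTreeOf u := Iff.rfl

theorem setOf_split_eq_range_oi (u : ℕ → List Bool) :
    { L | ∃ s : List Bool, s.length = L ∧ s ++ [false] ∈ silverTreeOf u ∧
      s ++ [true] ∈ silverTreeOf u } = range (oi u) := by
  ext L
  constructor
  · rintro ⟨s, rfl, ⟨n₀, i₀, h₀⟩, ⟨n₁, i₁, h₁⟩⟩
    by_contra hL
    have hne : ∀ m, s.length ≠ oi u m := fun m hm => hL ⟨m, hm.symm⟩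
    replace h₀ := h₀.trans (silverWord_prefix_silverWord (le_max_left n₀ n₁))
    replace h₁ := h₁.trans (silverWord_prefix_silverWord (le_max_right n₀ n₁))
    have hle : s.length ≤ oi u (max n₀ n₁) := by
      have := h₀.length_le; rw [length_silverWord] at this; simp at this; omega
    have key := getD_silverWord_of_ne_oi i₀ i₁ hle hne
    obtain ⟨t₀, ht₀⟩ := h₀
    obtain ⟨t₁, ht₁⟩ := h₁
    simp [← ht₀, ← ht₁] at key
  · rintro ⟨n, rfl⟩
    obtain ⟨s, hs, hword⟩ := exists_silverWord_eq_append (u := u) (i := fun _ => false) n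
    refine ⟨s, hs, ⟨n, fun _ => false, by rw [hword _ fun _ _ => rfl]⟩,
      ⟨n, fun m => decide (m = n), ?_⟩⟩
    rw [hword _ fun m hm => by simp [hm.ne]]
    simp

theorem oi_eq_of_isSilver {T : Set (List Bool)} {u' : ℕ → List Bool} (h : IsSilver T u)
    (h' : IsSilver T u') : oi u = oi u' := by
  rw [isSilver_iff] at h h'
  rw [← (oi_strictMono u).range_inj (oi_strictMono u'), ← setOf_split_eq_range_oi,
    ← setOf_split_eq_range_oi, ← h, ← h']

theorem refinesN_of_oi_eq {S T : Set (List Bool)} {uS uT : ℕ → List Bool} {n : ℕ}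
    (hS : IsSilver S uS) (hT : IsSilver T uT) (hST : S ⊆ T) (h : ∀ j < n, oi uS j = oi uT j) :
    RefinesN S T n :=
  ⟨hST, fun uS' uT' hS' hT' j hj => by
    rw [oi_eq_of_isSilver hS' hS, oi_eq_of_isSilver hT' hT]
    exact h j hj⟩

end SplittingLevels

section Branches

variable {u : ℕ → List Bool} {i j : ℕ → Bool} {x : ℕ → Bool}

theorem branches_mono {S T : Set (List Bool)} (h : S ⊆ T) : branches S ⊆ branches T :=
  fun _ ha n => h (ha n)

variable (u i) in
def silverBranch : ℕ → Bool := fun p => (silverWord u i p).getD p false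

variable (u i) in
theorem silverBranch_mem_listCylinder (n : ℕ) :
    silverBranch u i ∈ listCylinder (silverWord u i n) := by
  refine mem_listCylinder_iff.mpr fun p hp => ?_
  rw [← List.getD_eq_getElem _ false hp, silverBranch]
  rcases le_total p n with h | h
  · exact (getD_eq_getD_of_prefix (silverWord_prefix_silverWord h)
      (by rw [length_silverWord]; have := le_oi u p; omega) false).symm
  · exact getD_eq_getD_of_prefix (silverWord_prefix_silverWord h) hp false

variable (u i) in
theorem silverBranch_mem_branches : silverBranch u i ∈ branches (silverTreeOf u) :=
  fun m => ⟨m, i, prefix_of_mem_listCylinder (self_mem_listCylinder_ofFn _ m)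
    (silverBranch_mem_listCylinder u i m)
    (by simp only [restrictReal, List.length_ofFn, length_silverWord]; have := le_oi u m; omega)⟩

theorem apply_oi_of_mem_listCylinder {n m : ℕ} (hx : x ∈ listCylinder (silverWord u i n))
    (hm : m ≤ n) : x (oi u m) = i m := by
  have := (oi_strictMono u).monotone hm
  rw [apply_eq_getD_of_mem_listCylinder hx (by rw [length_silverWord]; omega) false,
    getD_silverWord_oi hm]

theorem le_of_silverWord_prefix {m n : ℕ} (h : silverWord u i m <+: silverWord u j n) :
    m ≤ n := by
  have := h.length_le
  rw [length_silverWord, length_silverWord] at this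
  exact (oi_strictMono u).le_iff_le.mp (by omega)

theorem eq_of_silverWord_prefix {m n l : ℕ} (h : silverWord u i m <+: silverWord u j n)
    (hl : l ≤ m) : j l = i l := by
  have hx := silverBranch_mem_listCylinder u j n
  rw [← apply_oi_of_mem_listCylinder hx (hl.trans (le_of_silverWord_prefix h)),
    apply_oi_of_mem_listCylinder (listCylinder_anti h hx) hl]

theorem mem_listCylinder_silverWord_of_mem_branches (hx : x ∈ branches (silverTreeOf u))
    (n : ℕ) : x ∈ listCylinder (silverWord u (fun m => x (oi u m)) n) := by
  obtain ⟨n', j, h⟩ := hx (oi u n + 1)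
  have hlen := h.length_le
  simp only [restrictReal, List.length_ofFn, length_silverWord] at hlen
  have hn : n ≤ n' := (oi_strictMono u).le_iff_le.mp (by omega)
  have hxj : x ∈ listCylinder (silverWord u j n) :=
    listCylinder_anti (List.prefix_of_prefix_length_le (silverWord_prefix_silverWord hn) h
      (by simp [restrictReal, length_silverWord])) (self_mem_listCylinder_ofFn x _)
  rwa [silverWord_congr (i' := fun m => x (oi u m)) (fun _ _ => rfl)
    fun m hm => (apply_oi_of_mem_listCylinder hxj hm).symm] at hxj

end Branches

section Freeze

def frozenSegment (u : ℕ → List Bool) (b : ℕ → Bool) (k : ℕ) : ℕ → List Bool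
  | 0 => u (k + 1)
  | r + 1 => frozenSegment u b k r ++ (b r :: u (k + 2 + r))

/-- The defining tuples of the Silver subtree of `silverTreeOf u` in which the splitting levels
`k + 1, …, k + r` are frozen to the bits `b 0, …, b (r - 1)`: these levels and the tuples
between them merge into the single tuple `frozenSegment u b k r`. -/
def freeze (u : ℕ → List Bool) (b : ℕ → Bool) (k r : ℕ) : ℕ → List Bool := fun n =>
  if n ≤ k then u n else if n = k + 1 then frozenSegment u b k r else u (n + r)

def freezeBits (b : ℕ → Bool) (k r : ℕ) (i : ℕ → Bool) : ℕ → Bool := fun m =>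
  if m ≤ k then i m else if m ≤ k + r then b (m - (k + 1)) else i (m - r)

variable {u : ℕ → List Bool} {b : ℕ → Bool} {k r : ℕ}

theorem frozenSegment_congr {b' : ℕ → Bool} (h : ∀ m < r, b m = b' m) :
    frozenSegment u b k r = frozenSegment u b' k r := by
  induction r with
  | zero => rfl
  | succ r ih => simp only [frozenSegment, ih fun m hm => h m (by omega), h r (by omega)]

theorem silverWord_eq_append_frozenSegment (g : ℕ → Bool) (r : ℕ) :
    silverWord u g (k + 1 + r) =
      silverWord u g k ++ (frozenSegment u (fun m => g (k + 1 + m)) k r ++ [g (k + 1 + r)]) := by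
  induction r with
  | zero => rfl
  | succ r ih =>
    rw [← add_assoc, silverWord_succ, ih]
    simp [frozenSegment, add_assoc, add_left_comm, Nat.add_comm r 2]

theorem silverWord_freeze_of_le {n : ℕ} (hn : n ≤ k) (i : ℕ → Bool) :
    silverWord (freeze u b k r) i n = silverWord u i n :=
  silverWord_congr (fun _ hm => if_pos (hm.trans hn)) fun _ _ => rfl

theorem silverWord_freeze (i : ℕ → Bool) (t : ℕ) :
    silverWord (freeze u b k r) i (k + 1 + t) =
      silverWord u (freezeBits b k r i) (k + 1 + r + t) := by
  induction t with
  | zero =>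
    have hk : silverWord u i k = silverWord u (freezeBits b k r i) k :=
      silverWord_congr (fun _ _ => rfl) fun m hm => (if_pos hm).symm
    have hseg : frozenSegment u b k r =
        frozenSegment u (fun m => freezeBits b k r i (k + 1 + m)) k r :=
      frozenSegment_congr fun m hm => by
        simp only [freezeBits]
        rw [if_neg (by omega), if_pos (by omega), Nat.add_sub_cancel_left]
    simp only [Nat.add_zero]
    rw [silverWord_eq_append_frozenSegment, silverWord_succ,
      silverWord_freeze_of_le le_rfl, hk, ← hseg]
    simp only [freeze, freezeBits]
    rw [if_neg (by omega), if_pos trivial, if_neg (by omega), if_neg (by omega), Nat.add_sub_cancel]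
  | succ t ih =>
    rw [← add_assoc, ← add_assoc, silverWord_succ, silverWord_succ, ih]
    simp only [freeze, freezeBits]
    rw [if_neg (by omega), if_neg (by omega), if_neg (by omega), if_neg (by omega),
      show k + 1 + t + 1 + r = k + 1 + r + t + 1 by omega,
      show k + 1 + r + t + 1 - r = k + 1 + t + 1 by omega]

theorem oi_freeze_of_le {n : ℕ} (hn : n ≤ k) : oi (freeze u b k r) n = oi u n := by
  have h := congrArg List.length
    (silverWord_freeze_of_le (u := u) (b := b) (r := r) hn fun _ => false)
  rwa [length_silverWord, length_silverWord, Nat.add_right_cancel_iff] at h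

end Freeze

section Subtrees

def spliceBits {n : ℕ} (β : Fin n → Bool) (b : ℕ → Bool) : ℕ → Bool := fun m =>
  if h : m < n then β ⟨m, h⟩ else b (m - n)

theorem clopenIn_of_portion_subset {T : Set (List Bool)} {u : ℕ → List Bool} {n : ℕ}
    (hsub : silverTreeOf u ⊆ T) (h : ∀ i, portion T (silverWord u i n) ⊆ silverTreeOf u) :
    ClopenIn (silverTreeOf u) T := by
  refine ⟨Finset.univ.image fun γ : Fin (n + 1) → Bool =>
    silverWord u (spliceBits γ fun _ => false) n, ?_, ?_⟩
  · intro s hs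
    obtain ⟨γ, -, rfl⟩ := Finset.mem_image.mp hs
    exact hsub ⟨n, _, List.prefix_refl _⟩
  · ext s
    simp only [mem_iUnion, exists_prop, Finset.mem_image, Finset.mem_univ, true_and]
    constructor
    · rintro ⟨m, i, hs⟩
      have hnode : silverWord u (spliceBits (fun j : Fin (n + 1) => i j) fun _ => false) n =
          silverWord u i n :=
        silverWord_congr (fun _ _ => rfl) fun m hm => by simp [spliceBits, Nat.lt_succ_of_le hm]
      refine ⟨_, ⟨fun j => i j, rfl⟩, hsub ⟨m, i, hs⟩, ?_⟩
      rw [hnode]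
      exact (List.prefix_or_prefix_of_prefix
        (hs.trans (silverWord_prefix_silverWord (le_max_left m n)))
        (silverWord_prefix_silverWord (le_max_right m n))).symm
    · rintro ⟨_, ⟨γ, rfl⟩, hs⟩
      exact h _ hs

variable {u : ℕ → List Bool} {b : ℕ → Bool} {k r : ℕ}

theorem silverWord_freeze_succ (i : ℕ → Bool) :
    silverWord (freeze u b k r) i (k + 1) = silverWord u (freezeBits b k r i) (k + 1 + r) := by
  simpa using silverWord_freeze (u := u) (b := b) (r := r) i 0

theorem silverTreeOf_freeze_subset : silverTreeOf (freeze u b k r) ⊆ silverTreeOf u := by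
  rintro s ⟨n, i, h⟩
  rcases le_or_gt n k with hn | hn
  · exact ⟨n, i, by rwa [silverWord_freeze_of_le hn] at h⟩
  · obtain ⟨t, rfl⟩ : ∃ t, n = k + 1 + t := ⟨n - (k + 1), by omega⟩
    exact ⟨_, _, by rwa [silverWord_freeze] at h⟩

theorem portion_subset_silverTreeOf_freeze (i : ℕ → Bool) :
    portion (silverTreeOf u) (silverWord (freeze u b k r) i (k + 1)) ⊆
      silverTreeOf (freeze u b k r) := by
  rintro s ⟨⟨n, j, hs⟩, hnode | hs'⟩
  · rw [silverWord_freeze_succ] at hnode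
    have hn := le_of_silverWord_prefix (hnode.trans hs)
    have hj := fun m (hm : m ≤ k + 1 + r) => eq_of_silverWord_prefix (hnode.trans hs) hm
    refine ⟨k + 1 + (n - (k + 1 + r)), fun m => if m ≤ k then j m else j (m + r), ?_⟩
    rw [silverWord_freeze, show k + 1 + r + (n - (k + 1 + r)) = n by omega,
      silverWord_congr (i' := j) (fun _ _ => rfl) fun m _ => ?_]
    · exact hs
    · simp only [freezeBits]
      by_cases hmk : m ≤ k
      · rw [if_pos hmk, if_pos hmk]
      by_cases hmr : m ≤ k + r
      · rw [if_neg hmk, if_pos hmr, hj m (by omega), freezeBits, if_neg hmk, if_pos hmr]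
      · rw [if_neg hmk, if_neg hmr, if_neg (by omega), Nat.sub_add_cancel (by omega)]
  · exact ⟨k + 1, i, hs'⟩

theorem mem_listCylinder_of_mem_branches_freeze {x : ℕ → Bool}
    (hx : x ∈ branches (silverTreeOf (freeze u b k r))) :
    x ∈ listCylinder
      (silverWord u (spliceBits (fun j : Fin (k + 1) => x (oi u j)) b) (k + r)) := by
  have h := mem_listCylinder_silverWord_of_mem_branches hx (k + 1)
  rw [silverWord_freeze_succ] at h
  refine listCylinder_anti ?_ h
  rw [silverWord_congr (i' := freezeBits b k r fun m => x (oi (freeze u b k r) m))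
    (fun _ _ => rfl) fun m hm => ?_]
  · exact silverWord_prefix_silverWord (by omega)
  · simp only [spliceBits, freezeBits]
    by_cases hmk : m ≤ k
    · rw [dif_pos (by omega), if_pos hmk, oi_freeze_of_le hmk]
    · rw [dif_neg (by omega), if_neg hmk, if_pos hm]

end Subtrees

section Approximation

theorem exists_ge_forall_mem_of_isUpperSet {P ι : Type*} [Preorder P] (s : Finset ι)
    {D : ι → Set P} (hup : ∀ i, IsUpperSet (D i)) (hD : ∀ i p, ∃ q, p ≤ q ∧ q ∈ D i)
    (p : P) :
    ∃ q, p ≤ q ∧ ∀ i ∈ s, q ∈ D i := by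
  classical
  induction s using Finset.induction_on generalizing p with
  | empty => exact ⟨p, le_rfl, by simp⟩
  | insert i s _ ih =>
    obtain ⟨q, hpq, hq⟩ := hD i p
    obtain ⟨q', hqq', hq'⟩ := ih q
    exact ⟨q', hpq.trans hqq', Finset.forall_mem_insert _ _ _ |>.mpr ⟨hup i hqq' hq, hq'⟩⟩

/-- A stage of the construction for a fixed `k`: the splitting levels `k + 1, …, k + level` are
frozen to `bits 0, …, bits (level - 1)`, and `stem` is the current approximation of `w`. -/
structure Approx where
  level : ℕ
  bits : ℕ → Bool
  stem : List ℕ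

instance : Preorder Approx where
  le c d := c.level ≤ d.level ∧ (∀ m < c.level, d.bits m = c.bits m) ∧ c.stem <+: d.stem
  le_refl c := ⟨le_rfl, fun _ _ => rfl, List.prefix_refl _⟩
  le_trans _ _ _ hcd hde := ⟨hcd.1.trans hde.1,
    fun m hm => (hde.2.1 m (hm.trans_le hcd.1)).trans (hcd.2.1 m hm), hcd.2.2.trans hde.2.2⟩

variable (u : ℕ → List Bool) (Z : Set ((ℕ → Bool) × (ℕ → ℕ))) {k : ℕ}

def Approx.Meets (β : Fin (k + 1) → Bool) (c : Approx) : Prop :=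
  (listCylinder (silverWord u (spliceBits β c.bits) (k + c.level)) ∩
    branches (silverTreeOf u)) ×ˢ baire c.stem ⊆ Z

theorem silverWord_spliceBits_prefix (β : Fin (k + 1) → Bool) {c d : Approx} (h : c ≤ d) :
    silverWord u (spliceBits β c.bits) (k + c.level) <+:
      silverWord u (spliceBits β d.bits) (k + d.level) := by
  rw [silverWord_congr (i' := spliceBits β d.bits) (fun _ _ => rfl) fun m hm => ?_]
  · exact silverWord_prefix_silverWord (by have := h.1; omega)
  · simp only [spliceBits]
    split_ifs
    · rfl
    · exact (h.2.1 _ (by omega)).symm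

theorem isUpperSet_meets (β : Fin (k + 1) → Bool) : IsUpperSet {c : Approx | c.Meets u Z β} :=
  fun _ _ h hc => (Set.prod_mono (Set.inter_subset_inter_left _
    (listCylinder_anti (silverWord_spliceBits_prefix u β h))) (listCylinder_anti h.2.2)).trans hc

variable {u Z}

theorem exists_ge_meets
    (hZopen :
      ∃ O, IsOpen O ∧ Z = O ∩ branches (silverTreeOf u) ×ˢ (univ : Set (ℕ → ℕ)))
    (hZdense : branches (silverTreeOf u) ×ˢ (univ : Set (ℕ → ℕ)) ⊆ closure Z)
    (β : Fin (k + 1) → Bool) (c : Approx) : ∃ d, c ≤ d ∧ d.Meets u Z β := by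
  set g := spliceBits β c.bits
  obtain ⟨t, w, hgt, hw, ⟨x, hxt, hxB⟩, hZ⟩ :=
    exists_prefix_listCylinder_prod_subset hZopen hZdense
      ⟨silverBranch u g, silverBranch_mem_listCylinder u g _, silverBranch_mem_branches u g⟩
      c.stem
  set n := k + c.level + t.length
  set j := fun m => x (oi u m)
  have hxj : x ∈ listCylinder (silverWord u j n) :=
    mem_listCylinder_silverWord_of_mem_branches hxB n
  have htj : t <+: silverWord u j n :=
    prefix_of_mem_listCylinder hxt hxj (by rw [length_silverWord]; have := le_oi u n; omega)
  have hgj : ∀ m ≤ k + c.level, j m = g m := fun _ => eq_of_silverWord_prefix (hgt.trans htj)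
  have hsplice : silverWord u (spliceBits β fun m => j (k + 1 + m)) n = silverWord u j n :=
    silverWord_congr (fun _ _ => rfl) fun m _ => by
      simp only [spliceBits]
      split_ifs with hm
      · rw [hgj m (by omega)]; simp [g, spliceBits, hm]
      · congr 1; omega
  refine ⟨⟨c.level + t.length, fun m => j (k + 1 + m), w⟩,
    ⟨Nat.le_add_right _ _, fun m hm => ?_, hw⟩, ?_⟩
  · show j (k + 1 + m) = c.bits m
    rw [hgj _ (by omega)]
    simp only [g, spliceBits]
    rw [dif_neg (by omega), Nat.add_sub_cancel_left]
  · show (listCylinder (silverWord u _ (k + (c.level + t.length))) ∩ _) ×ˢ _ ⊆ Z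
    rw [← add_assoc, hsplice]
    exact (Set.prod_mono (Set.inter_subset_inter_left _ (listCylinder_anti htj)) le_rfl).trans hZ

end Approximation

theorem stmt9_general (T : Set (List Bool)) (hT : SilverTree T) (k : ℕ) (v : List ℕ)
    (Z : Set ((ℕ → Bool) × (ℕ → ℕ)))
    (hZopen : ∃ O : Set ((ℕ → Bool) × (ℕ → ℕ)),
      IsOpen O ∧ Z = O ∩ (branches T ×ˢ (univ : Set (ℕ → ℕ))))
    (hZdense : branches T ×ˢ (univ : Set (ℕ → ℕ)) ⊆ closure Z) :
    ∃ w : List ℕ, v <+: w ∧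
      ∃ S : Set (List Bool), SilverTree S ∧ RefinesN S T (k + 1) ∧
        ClopenIn S T ∧ branches S ×ˢ baire w ⊆ Z := by
  obtain ⟨u, rfl⟩ := hT
  obtain ⟨c, hc, hmeets⟩ := exists_ge_forall_mem_of_isUpperSet Finset.univ
    (isUpperSet_meets u Z) (exists_ge_meets hZopen hZdense) ⟨0, fun _ => false, v⟩
  have hsub : silverTreeOf (freeze u c.bits k c.level) ⊆ silverTreeOf u :=
    silverTreeOf_freeze_subset
  refine ⟨c.stem, hc.2.2, _, ⟨_, rfl⟩,
    refinesN_of_oi_eq rfl rfl hsub fun _ hj => oi_freeze_of_le (Nat.le_of_lt_succ hj),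
    clopenIn_of_portion_subset hsub portion_subset_silverTreeOf_freeze, ?_⟩
  rintro ⟨x, y⟩ ⟨hx, hy⟩
  exact hmeets _ (Finset.mem_univ _)
    ⟨⟨mem_listCylinder_of_mem_branches_freeze hx, branches_mono hsub hx⟩, hy⟩

/-- if `T` is a Silver tree, `k < ω`, `v ∈ ω^{<ω}`, and
`Z ⊆ [T] × ω^ω` is open and dense in the subspace `[T] × ω^ω`, then there are
`w ⊇ v` and a Silver tree `S ⊑_{k+1} T`, clopen in `T`, with `[S] × B_w ⊆ Z`. -/
theorem stmt9 (T : Set (List Bool)) (hT : SilverTree T) (k : ℕ) (v : List ℕ)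
    (Z : Set ((ℕ → Bool) × (ℕ → ℕ)))
    (hZsub : Z ⊆ branches T ×ˢ (univ : Set (ℕ → ℕ)))
    (hZopen : ∃ O : Set ((ℕ → Bool) × (ℕ → ℕ)),
      IsOpen O ∧ Z = O ∩ (branches T ×ˢ (univ : Set (ℕ → ℕ))))
    (hZdense : branches T ×ˢ (univ : Set (ℕ → ℕ)) ⊆ closure Z) :
    ∃ w : List ℕ, v <+: w ∧
      ∃ S : Set (List Bool), SilverTree S ∧ RefinesN S T (k + 1) ∧
        ClopenIn S T ∧ branches S ×ˢ baire w ⊆ Z :=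
  stmt9_general T hT k v Z hZopen hZdense
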